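/- Evaluation of the normalization constant: for σ real and x a nonnegative integer, h_x := (-1)^x q^{2x(x+σ)} Σ_{n=0}^∞ (q^{n(n-1)} q^{-2σn}/(q²;q²)_n) ₂φ₁(q^{-2x}, q^{-2n}; 0; q², -q^{2+2σ+2x}) q^{-2nx} equals q^{-2x} (q²;q²)_x (-q^{2σ+2};q²)_x (-q^{-2σ};q²)_∞. -/

import Mathlib

/-- finite q-shifted factorial `(a;q)_k = ∏_{j=0}^{k-1} (1 - a q^j)` -/
noncomputable def qPoch (q a : ℝ) (k : ℕ) : ℝ := ∏ j ∈ Finset.range k, (1 - a * q ^ j)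

/-- infinite q-shifted factorial `(a;q)_∞ = ∏_{j≥0} (1 - a q^j)` -/
noncomputable def qPochInf (q a : ℝ) : ℝ := ∏' j : ℕ, (1 - a * q ^ j)

/-!
Write `Q = q²` and `s = q^{-2σ}`. Since `(Q^{-n};Q)_k = 0` for `k > n`, the inner sums may all be
taken over `k ≤ x`, and the two sums can be interchanged. For `n = m + k` the factor
`(Q^{-n};Q)_k / (Q;Q)_n` reflects to `(-1)^k Q^{C(k,2) - nk} / (Q;Q)_m`, so the `k`-th column is a
multiple of Euler's series `∑ₘ Q^{C(m,2)} wᵐ / (Q;Q)ₘ = (-w;Q)_∞` with `w = s Q^{-x}`, and the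
multiples add up to the terminating `q`-binomial sum `∑_{k ≤ x} (Q^{-x};Q)_k / (Q;Q)_k`, which is
Gauss's binomial formula at `-Q^{-x}` and equals `(Q^{-x};Q)_x`. Splitting off
`(-w;Q)_∞ = (-w;Q)_x (-s;Q)_∞` and reflecting the two finite products gives the right-hand side.
Euler's identity itself comes from `E(z) = (1 + z) E(Qz)` for the series `E` and `E(Qᴺ z) → 1`.
-/

open Finset Filter Topology

lemma Nat.choose_two_add (m k : ℕ) : (m + k).choose 2 = m.choose 2 + m * k + k.choose 2 := by
  induction k with
  | zero => simp
  | succ k ih =>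
    rw [← add_assoc, Nat.choose_succ_succ, ih, Nat.choose_one_right, Nat.choose_succ_succ,
      Nat.choose_one_right]
    ring

lemma Nat.two_mul_choose_two_add_self (n : ℕ) : 2 * n.choose 2 + n = n * n := by
  induction n with
  | zero => simp
  | succ n ih =>
    rw [Nat.choose_succ_succ, Nat.choose_one_right]
    linarith

lemma Nat.mul_sub_one_eq_two_mul_choose_two (n : ℕ) : n * (n - 1) = 2 * n.choose 2 := by
  have := Nat.two_mul_choose_two_add_self n
  rw [Nat.mul_sub_one]
  omega

@[simp] lemma qPoch_zero (Q a : ℝ) : qPoch Q a 0 = 1 := prod_range_zero _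

lemma qPoch_succ (Q a : ℝ) (n : ℕ) : qPoch Q a (n + 1) = qPoch Q a n * (1 - a * Q ^ n) :=
  prod_range_succ _ _

lemma qPoch_add (Q a : ℝ) (m n : ℕ) :
    qPoch Q a (m + n) = qPoch Q a m * qPoch Q (a * Q ^ m) n := by
  simp only [qPoch, prod_range_add, pow_add, mul_assoc, mul_comm (Q ^ m)]

lemma pow_mul_sub_one_eq_sq_pow_choose_two {M : Type*} [Monoid M] (q : M) (n : ℕ) :
    q ^ (n * (n - 1)) = (q ^ 2) ^ n.choose 2 := by
  rw [Nat.mul_sub_one_eq_two_mul_choose_two, pow_mul]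

lemma zpow_neg_two_mul {G : Type*} [DivisionRing G] (q : G) (n : ℕ) :
    q ^ (-(2 * n : ℤ)) = ((q ^ 2) ^ n)⁻¹ := by
  rw [zpow_neg, zpow_mul, zpow_natCast]
  norm_cast

section QPoch

variable {Q a b : ℝ}

lemma qPoch_self_pos (hQ0 : 0 ≤ Q) (hQ1 : Q < 1) (n : ℕ) : 0 < qPoch Q Q n :=
  prod_pos fun j _ => by
    have := pow_le_one₀ hQ0 hQ1.le (n := j)
    nlinarith

lemma qPoch_reflect (hQ : Q ≠ 0) {n : ℕ} (hab : a * b * Q ^ n = Q) :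
    qPoch Q a n = (-a) ^ n * Q ^ n.choose 2 * qPoch Q b n := by
  have hfactor : ∀ j ∈ range n,
      1 - a * Q ^ (n - 1 - j) = -a * Q ^ (n - 1 - j) * (1 - b * Q ^ j) := by
    intro j hj
    have hj : n - 1 - j + j + 1 = n := by have := mem_range.1 hj; omega
    have : a * b * Q ^ (n - 1 - j) * Q ^ j = 1 := by
      apply mul_right_cancel₀ hQ
      conv_rhs => rw [one_mul, ← hab, ← hj, pow_succ, pow_add]
      ring
    linear_combination -this
  rw [qPoch, ← prod_range_reflect, prod_congr rfl hfactor, prod_mul_distrib, prod_mul_distrib,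
    prod_const, card_range, prod_pow_eq_pow_sum, sum_range_reflect (fun i => i) n, sum_range_id,
    Nat.choose_two_right, qPoch]

lemma qPoch_inv_pow_eq_zero (hQ : Q ≠ 0) {n k : ℕ} (h : n < k) : qPoch Q (Q ^ n)⁻¹ k = 0 :=
  prod_eq_zero (mem_range.2 h) (by rw [inv_mul_cancel₀ (pow_ne_zero n hQ), sub_self])

lemma qPoch_inv_pow_mul_qPoch (hQ : Q ≠ 0) (k d : ℕ) :
    qPoch Q (Q ^ (k + d))⁻¹ k * qPoch Q Q d
      = (-(Q ^ (k + d))⁻¹) ^ k * Q ^ k.choose 2 * qPoch Q Q (k + d) := by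
  have hab : (Q ^ (k + d))⁻¹ * Q ^ (d + 1) * Q ^ k = Q := by
    field_simp
    ring
  rw [qPoch_reflect hQ hab, add_comm k d, qPoch_add, ← pow_succ']
  ring

lemma multipliable_one_sub_mul_pow (hQ : |Q| < 1) (a : ℝ) :
    Multipliable fun j : ℕ => 1 - a * Q ^ j := by
  simpa only [sub_eq_add_neg, neg_mul_eq_neg_mul] using
    Real.multipliable_one_add_of_summable ((summable_geometric_of_abs_lt_one hQ).mul_left (-a))

lemma qPochInf_eq_qPoch_mul (hQ : |Q| < 1) (a : ℝ) (n : ℕ) :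
    qPochInf Q a = qPoch Q a n * qPochInf Q (a * Q ^ n) := by
  have hshift : (fun j => 1 - a * Q ^ (j + n)) = fun j => 1 - a * Q ^ n * Q ^ j := by
    ext j
    ring
  have hmul : Multipliable fun j => 1 - a * Q ^ (j + n) := by
    rw [hshift]
    exact multipliable_one_sub_mul_pow hQ _
  have := Multipliable.prod_mul_tprod_nat_mul' (f := fun j => 1 - a * Q ^ j) (k := n) hmul
  rw [qPochInf, ← this, hshift, qPoch, qPochInf]

end QPoch

def qBinom (Q : ℝ) : ℕ → ℕ → ℝ
  | _, 0 => 1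
  | 0, _ + 1 => 0
  | n + 1, k + 1 => qBinom Q n k + Q ^ (k + 1) * qBinom Q n (k + 1)

lemma qBinom_eq_zero (Q : ℝ) : ∀ {n k : ℕ}, n < k → qBinom Q n k = 0
  | 0, _ + 1, _ => rfl
  | n + 1, k + 1, h => by
    rw [qBinom, qBinom_eq_zero Q (by omega : n < k), qBinom_eq_zero Q (by omega : n < k + 1)]
    ring

@[simp] lemma qBinom_zero_right (Q : ℝ) (n : ℕ) : qBinom Q n 0 = 1 := by cases n <;> rfl

lemma qBinom_mul_qPoch_mul_qPoch (Q : ℝ) :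
    ∀ {n k : ℕ}, k ≤ n → qBinom Q n k * qPoch Q Q k * qPoch Q Q (n - k) = qPoch Q Q n
  | n, 0, _ => by simp
  | n + 1, k + 1, h => by
    rcases (Nat.le_of_succ_le_succ h).eq_or_lt with rfl | hlt
    · have hk := qBinom_mul_qPoch_mul_qPoch Q (le_refl k)
      rw [Nat.sub_self, qPoch_zero, mul_one] at hk
      rw [qBinom, qBinom_eq_zero Q k.lt_succ_self, Nat.sub_self, qPoch_zero, qPoch_succ]
      linear_combination (1 - Q * Q ^ k) * hk
    · obtain ⟨d, rfl⟩ := Nat.exists_eq_add_of_lt hlt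
      have h₁ := qBinom_mul_qPoch_mul_qPoch Q (n := k + d + 1) (k := k) (by omega)
      have h₂ := qBinom_mul_qPoch_mul_qPoch Q (n := k + d + 1) (k := k + 1) (by omega)
      rw [show k + d + 1 - k = d + 1 by omega] at h₁
      rw [show k + d + 1 - (k + 1) = d by omega, qPoch_succ Q Q k] at h₂
      rw [show k + d + 1 + 1 - (k + 1) = d + 1 by omega, qBinom, qPoch_succ Q Q k,
        qPoch_succ Q Q (k + d + 1)]
      rw [qPoch_succ Q Q d] at h₁ ⊢
      linear_combination (1 - Q * Q ^ k) * h₁ + Q ^ (k + 1) * (1 - Q * Q ^ d) * h₂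

theorem prod_one_add_mul_pow_eq_sum_qBinom (Q : ℝ) :
    ∀ (n : ℕ) (w : ℝ),
      ∏ j ∈ range n, (1 + w * Q ^ j) = ∑ k ∈ range (n + 1), qBinom Q n k * Q ^ k.choose 2 * w ^ k
  | 0, w => by simp
  | n + 1, w => by
    have hprod : ∏ j ∈ range (n + 1), (1 + w * Q ^ j)
        = (1 + w) * ∏ j ∈ range n, (1 + (w * Q) * Q ^ j) := by
      rw [prod_range_succ', mul_comm]
      simp only [pow_succ, pow_zero, mul_one, mul_assoc, mul_comm Q]
    set f : ℕ → ℝ := fun k => qBinom Q n k * Q ^ k.choose 2 * (w * Q) ^ k with hf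
    have hshift : ∑ k ∈ range (n + 1), f (k + 1) = ∑ k ∈ range (n + 1), f k - 1 := by
      have h₀ : f 0 = 1 := by simp [hf]
      have hlast : f (n + 1) = 0 := by simp [hf, qBinom_eq_zero Q n.lt_succ_self]
      have := sum_range_succ' f (n + 1)
      rw [sum_range_succ, h₀, hlast] at this
      linarith
    rw [hprod, prod_one_add_mul_pow_eq_sum_qBinom Q n (w * Q)]
    calc (1 + w) * ∑ k ∈ range (n + 1), f k
        = ∑ k ∈ range (n + 1), (w * f k + f (k + 1)) + 1 := by
          rw [sum_add_distrib, ← mul_sum, hshift]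
          ring
      _ = _ := by
          rw [sum_range_succ' _ (n + 1)]
          congr 1
          · refine sum_congr rfl fun k _ => ?_
            simp only [hf, qBinom, Nat.choose_succ_succ, Nat.choose_one_right]
            ring
          · simp

lemma sum_qPoch_inv_pow_div_qPoch {Q : ℝ} (hQ0 : 0 < Q) (hQ1 : Q < 1) (n : ℕ) :
    ∑ k ∈ range (n + 1), qPoch Q (Q ^ n)⁻¹ k / qPoch Q Q k = qPoch Q (Q ^ n)⁻¹ n := by
  have hterm : ∀ k ∈ range (n + 1),
      qPoch Q (Q ^ n)⁻¹ k / qPoch Q Q k = qBinom Q n k * Q ^ k.choose 2 * (-(Q ^ n)⁻¹) ^ k := by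
    intro k hk
    obtain ⟨d, rfl⟩ := Nat.exists_eq_add_of_le (Nat.lt_succ_iff.1 (mem_range.1 hk))
    have hbinom := qBinom_mul_qPoch_mul_qPoch Q (Nat.le_add_right k d)
    rw [Nat.add_sub_cancel_left] at hbinom
    rw [div_eq_iff (qPoch_self_pos hQ0.le hQ1 k).ne']
    apply mul_right_cancel₀ (qPoch_self_pos hQ0.le hQ1 d).ne'
    rw [mul_right_comm, qPoch_inv_pow_mul_qPoch hQ0.ne', ← hbinom]
    ring
  rw [sum_congr rfl hterm, ← prod_one_add_mul_pow_eq_sum_qBinom]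
  exact prod_congr rfl fun j _ => by ring

noncomputable def eulerTerm (Q z : ℝ) (m : ℕ) : ℝ := Q ^ m.choose 2 * z ^ m / qPoch Q Q m

section Euler

variable {Q : ℝ}

lemma eulerTerm_mul_left (t z : ℝ) (m : ℕ) :
    eulerTerm Q (t * z) m = t ^ m * eulerTerm Q z m := by
  simp only [eulerTerm, mul_pow]
  ring

lemma eulerTerm_zero_left {m : ℕ} (hm : m ≠ 0) : eulerTerm Q 0 m = 0 := by
  simp [eulerTerm, hm]

lemma abs_eulerTerm (hQ0 : 0 ≤ Q) (hQ1 : Q < 1) (z : ℝ) (m : ℕ) :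
    |eulerTerm Q z m| = eulerTerm Q |z| m := by
  rw [eulerTerm, eulerTerm, abs_div, abs_mul, abs_pow, abs_pow, abs_of_nonneg hQ0,
    abs_of_pos (qPoch_self_pos hQ0 hQ1 m)]

lemma eulerTerm_nonneg (hQ0 : 0 ≤ Q) (hQ1 : Q < 1) {z : ℝ} (hz : 0 ≤ z) (m : ℕ) :
    0 ≤ eulerTerm Q z m := by
  have := qPoch_self_pos hQ0 hQ1 m
  unfold eulerTerm
  positivity

lemma eulerTerm_succ_mul (hQ0 : 0 ≤ Q) (hQ1 : Q < 1) (z : ℝ) (m : ℕ) :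
    eulerTerm Q z (m + 1) * (1 - Q * Q ^ m) = Q ^ m * z * eulerTerm Q z m := by
  have hpos := qPoch_self_pos hQ0 hQ1 (m + 1)
  rw [qPoch_succ] at hpos
  have h₁ : qPoch Q Q m ≠ 0 := (qPoch_self_pos hQ0 hQ1 m).ne'
  have h₂ : 1 - Q * Q ^ m ≠ 0 := by
    intro h
    rw [h, mul_zero] at hpos
    exact lt_irrefl 0 hpos
  simp only [eulerTerm, qPoch_succ, Nat.choose_succ_succ, Nat.choose_one_right]
  field_simp
  ring

lemma summable_eulerTerm (hQ0 : 0 ≤ Q) (hQ1 : Q < 1) (z : ℝ) : Summable (eulerTerm Q z) := by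
  have h1Q : 0 < 1 - Q := by linarith
  refine summable_of_ratio_norm_eventually_le (r := 1 / 2) (by norm_num) ?_
  have hsmall : ∀ᶠ m : ℕ in atTop, Q ^ m * |z| ≤ (1 - Q) / 2 := by
    have := (tendsto_pow_atTop_nhds_zero_of_lt_one hQ0 hQ1).mul_const |z|
    rw [zero_mul] at this
    exact this.eventually_le_const (by linarith)
  filter_upwards [hsmall] with m hm
  have hrec := congrArg abs (eulerTerm_succ_mul hQ0 hQ1 z m)
  have hfac : 1 - Q ≤ 1 - Q * Q ^ m := by
    have := pow_le_one₀ hQ0 hQ1.le (n := m)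
    nlinarith
  rw [abs_mul, abs_mul, abs_mul, abs_of_nonneg (pow_nonneg hQ0 m),
    abs_of_pos (h1Q.trans_le hfac)] at hrec
  rw [Real.norm_eq_abs, Real.norm_eq_abs]
  have hnn := abs_nonneg (eulerTerm Q z m)
  have hnn' := abs_nonneg (eulerTerm Q z (m + 1))
  nlinarith

lemma tsum_eulerTerm_eq_one_add_mul (hQ0 : 0 ≤ Q) (hQ1 : Q < 1) (z : ℝ) :
    ∑' m, eulerTerm Q z m = (1 + z) * ∑' m, eulerTerm Q (Q * z) m := by
  have hs := summable_eulerTerm hQ0 hQ1 z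
  have hs' := summable_eulerTerm hQ0 hQ1 (Q * z)
  have hstep : ∀ m,
      eulerTerm Q z (m + 1) = eulerTerm Q (Q * z) (m + 1) + z * eulerTerm Q (Q * z) m := by
    intro m
    rw [eulerTerm_mul_left, eulerTerm_mul_left]
    linear_combination eulerTerm_succ_mul hQ0 hQ1 z m
  rw [hs.tsum_eq_zero_add, hs'.tsum_eq_zero_add, tsum_congr hstep,
    ((summable_nat_add_iff 1).2 hs').tsum_add (hs'.mul_left z), tsum_mul_left,
    hs'.tsum_eq_zero_add]
  simp [eulerTerm]
  ring

lemma tendsto_tsum_eulerTerm_pow_mul (hQ0 : 0 ≤ Q) (hQ1 : Q < 1) (z : ℝ) :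
    Tendsto (fun N : ℕ => ∑' m, eulerTerm Q (Q ^ N * z) m) atTop (𝓝 1) := by
  have hlim : ∑' m, eulerTerm Q 0 m = 1 := by
    rw [tsum_eq_single 0 fun m hm => eulerTerm_zero_left hm]
    simp [eulerTerm]
  rw [← hlim]
  refine tendsto_tsum_of_dominated_convergence (bound := fun m => eulerTerm Q |z| m)
    (summable_eulerTerm hQ0 hQ1 |z|) (fun m => ?_) (Eventually.of_forall fun N m => ?_)
  · have hQN : Tendsto (fun N : ℕ => Q ^ N * z) atTop (𝓝 0) := by
      simpa using (tendsto_pow_atTop_nhds_zero_of_lt_one hQ0 hQ1).mul_const z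
    have hcont : Continuous fun w => eulerTerm Q w m := by
      unfold eulerTerm
      fun_prop
    exact hcont.tendsto 0 |>.comp hQN
  · rw [Real.norm_eq_abs, eulerTerm_mul_left, abs_mul, abs_of_nonneg (by positivity),
      abs_eulerTerm hQ0 hQ1]
    exact mul_le_of_le_one_left (eulerTerm_nonneg hQ0 hQ1 (abs_nonneg z) m)
      (pow_le_one₀ (by positivity) (pow_le_one₀ hQ0 hQ1.le))

lemma tsum_eulerTerm_eq_prod_mul (hQ0 : 0 ≤ Q) (hQ1 : Q < 1) (z : ℝ) (N : ℕ) :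
    ∑' m, eulerTerm Q z m = (∏ j ∈ range N, (1 + z * Q ^ j)) * ∑' m, eulerTerm Q (Q ^ N * z) m := by
  induction N with
  | zero => simp
  | succ N ih =>
    rw [ih, tsum_eulerTerm_eq_one_add_mul hQ0 hQ1 (Q ^ N * z), prod_range_succ, ← mul_assoc Q,
      ← pow_succ']
    ring

theorem hasSum_eulerTerm (hQ0 : 0 ≤ Q) (hQ1 : Q < 1) (z : ℝ) :
    HasSum (eulerTerm Q z) (qPochInf Q (-z)) := by
  have hQ : |Q| < 1 := by rwa [abs_of_nonneg hQ0]
  convert (summable_eulerTerm hQ0 hQ1 z).hasSum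
  have hprod : Tendsto (fun N => ∏ j ∈ range N, (1 + z * Q ^ j)) atTop (𝓝 (qPochInf Q (-z))) := by
    simpa only [qPochInf, neg_mul, sub_neg_eq_add] using
      (multipliable_one_sub_mul_pow hQ (-z)).tendsto_prod_tprod_nat
  have := hprod.mul (tendsto_tsum_eulerTerm_pow_mul hQ0 hQ1 z)
  rw [mul_one] at this
  refine tendsto_nhds_unique this ?_
  simp only [← tsum_eulerTerm_eq_prod_mul hQ0 hQ1 z]
  exact tendsto_const_nhds

end Euler

lemma eulerTerm_add_mul_qPoch_inv_pow {Q : ℝ} (hQ0 : 0 < Q) (hQ1 : Q < 1) (w : ℝ) (k m : ℕ) :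
    eulerTerm Q w (m + k) * qPoch Q (Q ^ (m + k))⁻¹ k = (-(w / Q)) ^ k * eulerTerm Q w m := by
  have hQ := hQ0.ne'
  have hPm := (qPoch_self_pos hQ0.le hQ1 m).ne'
  have hPkm := (qPoch_self_pos hQ0.le hQ1 (k + m)).ne'
  have hexp :
      Q ^ (k + m).choose 2 * Q ^ k.choose 2 * Q ^ k = Q ^ m.choose 2 * (Q ^ (k + m)) ^ k := by
    rw [← pow_add, ← pow_add, ← pow_mul, ← pow_add, Nat.choose_two_add]
    have := Nat.two_mul_choose_two_add_self k
    congr 1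
    linarith
  have h : qPoch Q (Q ^ (k + m))⁻¹ k
      = (-(Q ^ (k + m))⁻¹) ^ k * Q ^ k.choose 2 * qPoch Q Q (k + m) / qPoch Q Q m := by
    rw [← qPoch_inv_pow_mul_qPoch hQ k m]
    field_simp
  rw [add_comm m k, eulerTerm, eulerTerm, h, neg_pow, neg_pow (w / Q), inv_pow, div_pow]
  field_simp
  linear_combination w ^ (k + m) * hexp

lemma hasSum_eulerTerm_mul_qPoch_inv_pow {Q : ℝ} (hQ0 : 0 < Q) (hQ1 : Q < 1) (w : ℝ) (k : ℕ) :
    HasSum (fun n => eulerTerm Q w n * qPoch Q (Q ^ n)⁻¹ k) ((-(w / Q)) ^ k * qPochInf Q (-w)) := by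
  rw [← hasSum_nat_add_iff' k, sum_eq_zero fun n hn => by
    rw [qPoch_inv_pow_eq_zero hQ0.ne' (mem_range.1 hn), mul_zero], sub_zero]
  simp only [eulerTerm_add_mul_qPoch_inv_pow hQ0 hQ1]
  exact (hasSum_eulerTerm hQ0.le hQ1 w).mul_left _

theorem hasSum_normalization_series {Q s : ℝ} (hQ0 : 0 < Q) (hQ1 : Q < 1) (hs : s ≠ 0) (x : ℕ) :
    HasSum (fun n : ℕ => Q ^ n.choose 2 * s ^ n / qPoch Q Q n
        * (∑ k ∈ range (min x n + 1), qPoch Q (Q ^ x)⁻¹ k * qPoch Q (Q ^ n)⁻¹ k / qPoch Q Q k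
            * (-(Q ^ (x + 1) / s)) ^ k)
        * ((Q ^ x)⁻¹) ^ n)
      (qPoch Q (Q ^ x)⁻¹ x * qPochInf Q (-(s * (Q ^ x)⁻¹))) := by
  set w := s * (Q ^ x)⁻¹
  set c : ℕ → ℝ := fun k => qPoch Q (Q ^ x)⁻¹ k / qPoch Q Q k * (-(Q ^ (x + 1) / s)) ^ k
  have hcoef : ∀ k, c k * ((-(w / Q)) ^ k * qPochInf Q (-w))
      = qPoch Q (Q ^ x)⁻¹ k / qPoch Q Q k * qPochInf Q (-w) := by
    intro k
    -- the argument `-q^{2+2σ+2x}` of the `₂φ₁` is exactly what cancels the column factor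
    have : -(Q ^ (x + 1) / s) * -(w / Q) = 1 := by
      simp only [w]
      field_simp
      ring
    simp only [c]
    rw [mul_assoc, ← mul_assoc (_ ^ k), ← mul_pow, this, one_pow, one_mul]
  have hcols := hasSum_sum fun k (_ : k ∈ range (x + 1)) =>
    (hasSum_eulerTerm_mul_qPoch_inv_pow hQ0 hQ1 w k).mul_left (c k)
  rw [sum_congr rfl fun k _ => hcoef k, ← sum_mul, sum_qPoch_inv_pow_div_qPoch hQ0 hQ1] at hcols
  refine hcols.congr_fun fun n => ?_
  rw [← sum_subset (range_subset_range.2 (by omega : min x n + 1 ≤ x + 1)) fun k hk hk' => by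
    rw [qPoch_inv_pow_eq_zero hQ0.ne' (by simp at hk hk'; omega)]; ring, mul_sum, sum_mul]
  refine sum_congr rfl fun k _ => ?_
  simp only [c, w, eulerTerm, mul_pow, inv_pow]
  ring

theorem normalization_tsum_eq {Q s : ℝ} (hQ0 : 0 < Q) (hQ1 : Q < 1) (hs : s ≠ 0) (x : ℕ) :
    (-1) ^ x * (Q ^ (x * x) / s ^ x) *
      ∑' n : ℕ, Q ^ n.choose 2 * s ^ n / qPoch Q Q n
        * (∑ k ∈ range (min x n + 1), qPoch Q (Q ^ x)⁻¹ k * qPoch Q (Q ^ n)⁻¹ k / qPoch Q Q k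
            * (-(Q ^ (x + 1) / s)) ^ k)
        * ((Q ^ x)⁻¹) ^ n
    = (Q ^ x)⁻¹ * qPoch Q Q x * qPoch Q (-(Q / s)) x * qPochInf Q (-s) := by
  have hQ := hQ0.ne'
  have hQabs : |Q| < 1 := by rwa [abs_of_pos hQ0]
  have hsplit := qPochInf_eq_qPoch_mul hQabs (-(s * (Q ^ x)⁻¹)) x
  have hreflect := qPoch_reflect hQ (a := -(s * (Q ^ x)⁻¹)) (b := -(Q / s)) (n := x) (by field_simp)
  have hfirst := qPoch_inv_pow_mul_qPoch hQ x 0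
  simp only [add_zero, qPoch_zero, mul_one] at hfirst
  have hpow : Q ^ (x * x) = Q ^ x.choose 2 * Q ^ x.choose 2 * Q ^ x := by
    rw [← pow_add, ← pow_add, ← Nat.two_mul_choose_two_add_self x, two_mul]
  have hsign : (-1 : ℝ) ^ x * (-1) ^ x = 1 := by
    rw [← mul_pow]
    norm_num
  rw [(hasSum_normalization_series hQ0 hQ1 hs x).tsum_eq, hsplit, hreflect, hfirst,
    show -(s * (Q ^ x)⁻¹) * Q ^ x = -s by field_simp]
  rw [neg_neg, neg_pow ((Q ^ x)⁻¹), mul_pow s, inv_pow, ← pow_mul, hpow]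
  field_simp
  linear_combination qPoch Q Q x * qPoch Q (-(Q / s)) x * qPochInf Q (-s) * hsign

/-- Evaluation of the normalization constant `h_x`:
`(-1)^x q^{2x(x+σ)} Σ_n (q^{n(n-1)} q^{-2σn}/(q²;q²)_n) ₂φ₁(q^{-2x},q^{-2n};0;q²,-q^{2+2σ+2x}) q^{-2nx}`
equals `q^{-2x} (q²;q²)_x (-q^{2σ+2};q²)_x (-q^{-2σ};q²)_∞`. -/
theorem normalization_constant_eval (q σ : ℝ) (hq0 : 0 < q) (hq1 : q < 1) (x : ℕ) :
    (-1 : ℝ) ^ x * q ^ ((2 : ℝ) * x * ((x : ℝ) + σ)) *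
      ∑' n : ℕ,
        q ^ (n * (n - 1)) * q ^ (-(2 : ℝ) * σ * n) / qPoch (q ^ 2) (q ^ 2) n
          * (∑ k ∈ Finset.range (min x n + 1),
              qPoch (q ^ 2) (q ^ (-(2 * x : ℤ))) k * qPoch (q ^ 2) (q ^ (-(2 * n : ℤ))) k
                / qPoch (q ^ 2) (q ^ 2) k * (-(q ^ ((2 : ℝ) + 2 * σ + 2 * x))) ^ k)
          * q ^ (-(2 * n * x : ℤ))
    = q ^ (-(2 * x : ℤ)) * qPoch (q ^ 2) (q ^ 2) x
        * qPoch (q ^ 2) (-(q ^ ((2 : ℝ) * σ + 2))) x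
        * qPochInf (q ^ 2) (-(q ^ (-(2 : ℝ) * σ))) := by
  set s := q ^ (-(2 : ℝ) * σ) with hs_def
  have hs_inv : q ^ (2 * σ) = s⁻¹ := by rw [hs_def, neg_mul, Real.rpow_neg hq0.le, inv_inv]
  have hs_pow (n : ℕ) : q ^ (-(2 : ℝ) * σ * n) = s ^ n := Real.rpow_mul_natCast hq0.le _ n
  have hzpow (n : ℕ) : q ^ (-(2 * n * x : ℤ)) = (((q ^ 2) ^ x)⁻¹) ^ n := by
    rw [show -(2 * (n : ℤ) * x) = -(2 * x) * n by ring, zpow_mul, zpow_neg_two_mul, zpow_natCast]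
  have hratio : q ^ ((2 : ℝ) + 2 * σ + 2 * x) = (q ^ 2) ^ (x + 1) / s := by
    rw [Real.rpow_add hq0, Real.rpow_add hq0, hs_inv, Real.rpow_mul_natCast hq0.le, Real.rpow_two]
    ring
  have hprefactor : q ^ ((2 : ℝ) * x * ((x : ℝ) + σ)) = (q ^ 2) ^ (x * x) / s ^ x := by
    rw [show (2 : ℝ) * x * ((x : ℝ) + σ) = 2 * ((x * x : ℕ) : ℝ) + 2 * σ * x by push_cast; ring,
      Real.rpow_add hq0, Real.rpow_mul_natCast hq0.le, Real.rpow_mul_natCast hq0.le, Real.rpow_two,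
      hs_inv, inv_pow]
    ring
  have hbase : q ^ ((2 : ℝ) * σ + 2) = q ^ 2 / s := by
    rw [Real.rpow_add hq0, hs_inv, Real.rpow_two]
    ring
  simp only [pow_mul_sub_one_eq_sq_pow_choose_two, hs_pow, zpow_neg_two_mul, hzpow, hratio,
    hprefactor, hbase]
  exact normalization_tsum_eq (by positivity) (by nlinarith) (Real.rpow_pos_of_pos hq0 _).ne' x
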